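/- There exists a constant c(r,d) > 0 such that for all N divisible by r(r+1)/2, the total dimension of GL(d) irreducible representations over Young diagrams with N boxes and at most r rows satisfies ∑_{λ ∈ Y_{N,r}} d_λ ≥ c(r,d) · N^{(2dr−r²+r−2)/2}. -/

import Mathlib

/-!
Write `r = m + 1`, `T = r(r+1)/2` and `N = T t`. The core diagrams have rows `(r - i) t + f i`
for `i < m` and a last row `t - ∑ f i`, where `0 ≤ f i ≤ t / (2r)`; they have `N` boxes and
there are `(t / (2r) + 1) ^ m ≳ N ^ (r - 1)` of them. Since `2 ∑ f i ≤ t`, any two of the first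
`r` rows differ by at least `t / 2` and each is at least `t / 2`, so in the Weyl product every
one of the `∑_{i<r} (d - 1 - i) = rd - r(r+1)/2` factors that involves a nonzero row is at least
`t / 2`, while the factors between zero rows are at least `1`.
-/

open scoped Classical

/-- The Weyl dimension formula for the irreducible `GL(d)` representation labeled by a
Young diagram `λ = (λ_1 ≥ … ≥ λ_d ≥ 0)` (0-indexed here). -/
noncomputable def weylDim (d : ℕ) (lam : Fin d → ℕ) : ℝ :=
  (∏ p ∈ Finset.univ.filter (fun p : Fin d × Fin d => p.1 < p.2),
      ((lam p.1 : ℝ) - (lam p.2 : ℝ) - (p.1 : ℝ) + (p.2 : ℝ))) /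
    ∏ k ∈ Finset.range d, (Nat.factorial k : ℝ)

/-- The set of Young diagrams with `N` boxes and at most `r` rows, encoded as weakly
decreasing tuples of `r` entries in `{0, …, N}` summing to `N`. -/
noncomputable def youngDiagrams (N r : ℕ) : Finset (Fin r → Fin (N + 1)) :=
  Finset.univ.filter (fun lam =>
    (∀ i j : Fin r, i ≤ j → (lam j : ℕ) ≤ (lam i : ℕ)) ∧ ∑ i, (lam i : ℕ) = N)

/-- Extension of an `r`-row diagram to `d ≥ r` rows by appending zero rows. -/
def padDiagram (d r N : ℕ) (lam : Fin r → Fin (N + 1)) : Fin d → ℕ :=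
  fun i => if h : (i : ℕ) < r then (lam ⟨i, h⟩ : ℕ) else 0

open Finset
open scoped Nat

lemma sum_range_add_one_mul_two (n : ℕ) : (∑ i ∈ range n, (i + 1)) * 2 = n * (n + 1) := by
  have h := sum_range_id_mul_two (n + 1)
  rw [sum_range_succ'] at h
  simpa [mul_comm] using h

lemma two_mul_sum_range_sub_add {r d : ℕ} (hrd : r ≤ d) :
    2 * ∑ i ∈ range r, (d - 1 - i) + r * (r + 1) = 2 * (r * d) := by
  have h : ∑ i ∈ range r, (d - 1 - i) + ∑ i ∈ range r, (i + 1) = r * d := by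
    rw [← sum_add_distrib, sum_congr rfl fun i hi => (by have := mem_range.mp hi; omega :
      d - 1 - i + (i + 1) = d), sum_const, card_range, smul_eq_mul]
  have := sum_range_add_one_mul_two r
  omega

lemma dimension_exponent_eq {m d : ℕ} (hrd : m + 1 ≤ d) :
    (2 * d * (m + 1) - (m + 1) ^ 2 + (m + 1) - 2) / 2 = m + ∑ i ∈ range (m + 1), (d - 1 - i) := by
  have h := two_mul_sum_range_sub_add hrd
  rw [show 2 * d * (m + 1) = 2 * ((m + 1) * d) by ring, sq]
  rw [mul_add, mul_one] at h
  omega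

def zeroPad (d : ℕ) {r : ℕ} (μ : Fin r → ℕ) : Fin d → ℕ :=
  fun i => if h : (i : ℕ) < r then μ ⟨i, h⟩ else 0

lemma padDiagram_eq_zeroPad (d r N : ℕ) (lam : Fin r → Fin (N + 1)) :
    padDiagram d r N lam = zeroPad d fun i => (lam i : ℕ) := rfl

lemma Antitone.zeroPad {d r : ℕ} {μ : Fin r → ℕ} (hμ : Antitone μ) : Antitone (zeroPad d μ) := by
  intro i j hij
  unfold _root_.zeroPad
  split_ifs with hj hi hi
  · exact hμ (Fin.mk_le_mk.mpr hij)
  · exact absurd (lt_of_le_of_lt (Fin.le_def.mp hij) hj) hi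
  · exact Nat.zero_le _
  · exact le_rfl

lemma weylDim_nonneg {d : ℕ} {lam : Fin d → ℕ} (h : Antitone lam) : 0 ≤ weylDim d lam := by
  refine div_nonneg (prod_nonneg fun p hp => ?_) (prod_nonneg fun k _ => by positivity)
  have hlt : p.1 < p.2 := (mem_filter.mp hp).2
  have : (lam p.2 : ℝ) ≤ lam p.1 := by exact_mod_cast h hlt.le
  have : (p.1 : ℝ) ≤ p.2 := by exact_mod_cast hlt.le
  linarith

lemma card_filter_fst_lt {d r : ℕ} (hrd : r ≤ d) :
    #{p ∈ univ.filter (fun p : Fin d × Fin d => p.1 < p.2) | (p.1 : ℕ) < r} =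
      ∑ i ∈ range r, (d - 1 - i) := by
  rw [card_eq_sum_ones, sum_filter, sum_filter, ← univ_product_univ, sum_product]
  have hrow (i : Fin d) : (∑ j, if i < j then (if (i : ℕ) < r then 1 else 0) else 0) =
      if (i : ℕ) < r then d - 1 - i else 0 := by
    split_ifs <;> simp [sum_boole, ← Fin.card_Ioi, filter_lt_eq_Ioi]
  rw [sum_congr rfl fun i _ => hrow i,
    Fin.sum_univ_eq_sum_range (fun i => if i < r then d - 1 - i else 0), ← sum_filter]
  congr 1
  ext i
  simp only [mem_filter, mem_range]
  omega

lemma pow_div_le_weylDim_zeroPad {d r : ℕ} (hrd : r ≤ d) {μ : Fin r → ℕ} {g : ℝ} (hg : 0 ≤ g)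
    (hgap : ∀ i j, i < j → g ≤ (μ i : ℝ) - μ j) (hrow : ∀ i, g ≤ μ i) :
    g ^ (∑ i ∈ range r, (d - 1 - i)) / ∏ k ∈ range d, (k ! : ℝ) ≤ weylDim d (zeroPad d μ) := by
  have hfactor (p : Fin d × Fin d) (hp : p.1 < p.2) :
      (if (p.1 : ℕ) < r then g else 1) ≤
        (zeroPad d μ p.1 : ℝ) - zeroPad d μ p.2 - (p.1 : ℝ) + (p.2 : ℝ) := by
    have hp' : ((p.1 : ℕ) : ℝ) + 1 ≤ (p.2 : ℕ) := by exact_mod_cast hp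
    unfold zeroPad
    split_ifs with h1 h2 h2
    · have := hgap ⟨p.1, h1⟩ ⟨p.2, h2⟩ hp
      linarith
    · have := hrow ⟨p.1, h1⟩
      push_cast
      linarith
    · omega
    · push_cast
      linarith
  unfold weylDim
  gcongr
  calc g ^ (∑ i ∈ range r, (d - 1 - i))
      = ∏ p ∈ univ.filter (fun p : Fin d × Fin d => p.1 < p.2),
          (if (p.1 : ℕ) < r then g else 1) := by
        rw [prod_ite, prod_const, prod_const, one_pow, mul_one, card_filter_fst_lt hrd]
    _ ≤ _ := prod_le_prod (fun p _ => by split_ifs <;> positivity)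
        fun p hp => hfactor p (mem_filter.mp hp).2

lemma sum_le_sum_youngDiagrams {N r : ℕ} (S : Finset (Fin r → ℕ))
    (hS : ∀ μ ∈ S, Antitone μ ∧ ∑ i, μ i = N) (F : (Fin r → ℕ) → ℝ)
    (hF : ∀ μ, Antitone μ → 0 ≤ F μ) :
    ∑ μ ∈ S, F μ ≤ ∑ lam ∈ youngDiagrams N r, F fun i => lam i := by
  rw [← sum_image (g := fun (lam : Fin r → Fin (N + 1)) i => (lam i : ℕ))
    fun _ _ _ _ h => funext fun i => Fin.ext (congrFun h i)]
  refine sum_le_sum_of_subset_of_nonneg (fun μ hμ => ?_) fun μ hμ _ => ?_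
  · obtain ⟨hanti, hsum⟩ := hS μ hμ
    have hle (i : Fin r) : μ i < N + 1 :=
      Nat.lt_succ_of_le (hsum ▸ single_le_sum (fun _ _ => Nat.zero_le _) (mem_univ i))
    refine mem_image.mpr ⟨fun i => ⟨μ i, hle i⟩, ?_, rfl⟩
    simpa [youngDiagrams] using ⟨fun i j hij => hanti hij, hsum⟩
  · obtain ⟨lam, hlam, rfl⟩ := mem_image.mp hμ
    exact hF _ fun i j hij => (mem_filter.mp hlam).2.1 i j hij

lemma sum_range_sub_add_one (m : ℕ) :
    ∑ i ∈ range m, (m + 1 - i) + 1 = ∑ i ∈ range (m + 1), (i + 1) := by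
  rw [← sum_range_reflect (fun i => i + 1) (m + 1), sum_range_succ]
  refine congrArg₂ _ (sum_congr rfl fun i hi => ?_) (by omega)
  have := mem_range.mp hi
  omega

def coreDiagram (m t : ℕ) (f : Fin m → ℕ) : Fin (m + 1) → ℕ :=
  Fin.snoc (fun i : Fin m => (m + 1 - i) * t + f i) (t - ∑ i, f i)

section coreDiagram

variable {m t : ℕ} {f : Fin m → ℕ}

@[simp]
lemma coreDiagram_castSucc (i : Fin m) :
    coreDiagram m t f i.castSucc = (m + 1 - i) * t + f i :=
  Fin.snoc_castSucc ..

@[simp]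
lemma coreDiagram_last : coreDiagram m t f (Fin.last m) = t - ∑ i, f i :=
  Fin.snoc_last ..

lemma coreDiagram_injective : Function.Injective (coreDiagram m t) := fun f g h =>
  funext fun i => by simpa using congrFun h i.castSucc

lemma sum_coreDiagram (hf : ∑ i, f i ≤ t) :
    ∑ i, coreDiagram m t f i = (m + 1) * (m + 1 + 1) / 2 * t := by
  have hT := sum_range_add_one_mul_two (m + 1)
  have hS := sum_range_sub_add_one m
  rw [Fin.sum_univ_castSucc]
  simp only [coreDiagram_castSucc, coreDiagram_last]
  rw [sum_add_distrib, ← sum_mul, Fin.sum_univ_eq_sum_range (fun i => m + 1 - i),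
    show (m + 1) * (m + 1 + 1) / 2 = ∑ i ∈ range m, (m + 1 - i) + 1 by omega, add_one_mul]
  omega

lemma coreDiagram_gap (hf : 2 * ∑ i, f i ≤ t) {i j : Fin (m + 1)} (hij : i < j) :
    2 * coreDiagram m t f j + t ≤ 2 * coreDiagram m t f i := by
  induction i using Fin.lastCases with
  | last => exact absurd hij (not_lt.mpr (Fin.le_last j))
  | cast i =>
    have hi : 2 * t ≤ (m + 1 - i) * t := Nat.mul_le_mul_right t (by omega)
    induction j using Fin.lastCases with
    | last =>
      simp only [coreDiagram_castSucc, coreDiagram_last]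
      omega
    | cast j =>
      have hfj : f j ≤ ∑ k, f k := single_le_sum (fun _ _ => Nat.zero_le _) (mem_univ j)
      have hj : (m + 1 - j + 1) * t ≤ (m + 1 - i) * t :=
        Nat.mul_le_mul_right t (by have := Fin.castSucc_lt_castSucc_iff.mp hij; omega)
      simp only [coreDiagram_castSucc]
      rw [add_one_mul] at hj
      omega

lemma le_two_mul_coreDiagram (hf : 2 * ∑ i, f i ≤ t) (i : Fin (m + 1)) :
    t ≤ 2 * coreDiagram m t f i := by
  induction i using Fin.lastCases with
  | last =>
    simp only [coreDiagram_last]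
    omega
  | cast i =>
    have hi : t ≤ (m + 1 - i) * t := Nat.le_mul_of_pos_left t (by omega)
    simp only [coreDiagram_castSucc]
    omega

lemma coreDiagram_antitone (hf : 2 * ∑ i, f i ≤ t) : Antitone (coreDiagram m t f) := by
  intro i j hij
  rcases hij.lt_or_eq with hij | rfl
  · have := coreDiagram_gap hf hij
    omega
  · exact le_rfl

end coreDiagram

def coreDiagrams (m t : ℕ) : Finset (Fin (m + 1) → ℕ) :=
  (Fintype.piFinset fun _ : Fin m => range (t / (2 * (m + 1)) + 1)).image (coreDiagram m t)

section coreDiagrams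

variable {m t : ℕ}

lemma card_coreDiagrams : #(coreDiagrams m t) = (t / (2 * (m + 1)) + 1) ^ m := by
  simp [coreDiagrams, card_image_of_injective _ coreDiagram_injective]

lemma exists_of_mem_coreDiagrams {μ : Fin (m + 1) → ℕ} (hμ : μ ∈ coreDiagrams m t) :
    ∃ f : Fin m → ℕ, 2 * ∑ i, f i ≤ t ∧ coreDiagram m t f = μ := by
  obtain ⟨f, hf, rfl⟩ := mem_image.mp hμ
  refine ⟨f, ?_, rfl⟩
  have hsum : ∑ i, f i ≤ m * (t / (2 * (m + 1))) := by
    simpa using sum_le_card_nsmul univ f _ fun i _ =>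
      Nat.lt_succ_iff.mp (mem_range.mp (Fintype.mem_piFinset.mp hf i))
  have hq : 2 * (m + 1) * (t / (2 * (m + 1))) ≤ t := Nat.mul_div_le t _
  nlinarith

lemma antitone_and_sum_of_mem_coreDiagrams {μ : Fin (m + 1) → ℕ} (hμ : μ ∈ coreDiagrams m t) :
    Antitone μ ∧ ∑ i, μ i = (m + 1) * (m + 1 + 1) / 2 * t := by
  obtain ⟨f, hf, rfl⟩ := exists_of_mem_coreDiagrams hμ
  exact ⟨coreDiagram_antitone hf, sum_coreDiagram (by omega)⟩

lemma le_weylDim_zeroPad_of_mem_coreDiagrams {d : ℕ} (hrd : m + 1 ≤ d)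
    {μ : Fin (m + 1) → ℕ} (hμ : μ ∈ coreDiagrams m t) :
    ((t : ℝ) / 2) ^ (∑ i ∈ range (m + 1), (d - 1 - i)) / ∏ k ∈ range d, (k ! : ℝ) ≤
      weylDim d (zeroPad d μ) := by
  obtain ⟨f, hf, rfl⟩ := exists_of_mem_coreDiagrams hμ
  refine pow_div_le_weylDim_zeroPad hrd (by positivity) (fun i j hij => ?_) fun i => ?_
  · have : (2 * coreDiagram m t f j + t : ℝ) ≤ 2 * coreDiagram m t f i := by
      exact_mod_cast coreDiagram_gap hf hij
    linarith
  · have : (t : ℝ) ≤ 2 * coreDiagram m t f i := by exact_mod_cast le_two_mul_coreDiagram hf i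
    linarith

end coreDiagrams

/-- There is a constant `c(r,d) > 0` such that for all `N` divisible by `r(r+1)/2`,
the total Weyl dimension over Young diagrams with `N` boxes and at most `r` rows is at
least `c(r,d) ⬝ N^((2dr - r² + r - 2)/2)`. -/
theorem total_dimension_lower_bound (d r : ℕ) (hr : 1 ≤ r) (hrd : r ≤ d) :
    ∃ c : ℝ, 0 < c ∧ ∀ N : ℕ, r * (r + 1) / 2 ∣ N →
      c * (N : ℝ) ^ ((2 * d * r - r ^ 2 + r - 2) / 2)
        ≤ ∑ lam ∈ youngDiagrams N r, weylDim d (padDiagram d r N lam) := by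
  obtain ⟨m, rfl⟩ : ∃ m, r = m + 1 := ⟨r - 1, by omega⟩
  rw [dimension_exponent_eq hrd]
  simp only [padDiagram_eq_zeroPad]
  set T := (m + 1) * (m + 1 + 1) / 2
  set P := ∑ i ∈ range (m + 1), (d - 1 - i)
  set C := ∏ k ∈ range d, (k ! : ℝ)
  have hT : 0 < T := Nat.div_pos (by nlinarith) two_pos
  refine ⟨((2 * (m + 1) * T : ℕ) ^ (m + P) * C : ℝ)⁻¹, by positivity, fun N ⟨t, hN⟩ => ?_⟩
  subst hN
  have hq : (t : ℝ) / (2 * (m + 1)) ≤ (t / (2 * (m + 1)) + 1 : ℕ) := by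
    have := Nat.lt_floor_add_one ((t : ℝ) / (2 * (m + 1) : ℕ))
    rw [Nat.floor_div_eq_div] at this
    exact_mod_cast this.le
  have hx : ((T * t : ℕ) : ℝ) / (2 * (m + 1) * T : ℕ) = (t : ℝ) / (2 * (m + 1)) := by
    push_cast
    field_simp
  calc _ = ((t : ℝ) / (2 * (m + 1))) ^ m * (((t : ℝ) / (2 * (m + 1))) ^ P / C) := by
        rw [← hx]
        ring
    _ ≤ ((t / (2 * (m + 1)) + 1 : ℕ) : ℝ) ^ m * (((t : ℝ) / 2) ^ P / C) := by
        gcongr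
        linarith
    _ = #(coreDiagrams m t) • (((t : ℝ) / 2) ^ P / C) := by
        rw [card_coreDiagrams, nsmul_eq_mul]
        push_cast
        ring
    _ ≤ ∑ μ ∈ coreDiagrams m t, weylDim d (zeroPad d μ) :=
        card_nsmul_le_sum _ _ _ fun μ hμ =>
          le_weylDim_zeroPad_of_mem_coreDiagrams hrd hμ
    _ ≤ _ := sum_le_sum_youngDiagrams _ (fun μ hμ => antitone_and_sum_of_mem_coreDiagrams hμ) _
        fun μ hμ => weylDim_nonneg hμ.zeroPad
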